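/- arXiv:2309.15286 — 2 statements merged into one kernel-verified Lean document; each statement's English description precedes it below -/
import Mathlib

section
/- Let k ≥ 1 and work in ℝ^k. Let v_1 = (1,1,…,1) be the all-ones vector and let v_{j+1} = √k · e_j for j = 1,…,k, where e_1,…,e_k is the standard basis, and set P = {v_1,…,v_{k+1}}. Then: (a) v_1,…,v_k is a greedy sequence for P; (b) vol(v_1,…,v_k)² = k^{k−1}; and (c) vol(v_2,…,v_{k+1})² = k^k. In particular, vol(v_2,…,v_{k+1}) = √k · vol(v_1,…,v_k) with vol(v_1,…,v_k) > 0, so the (1+√k) local-optimality guarantee of the greedy algorithm is tight up to the additive constant 1. -/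
/-! The volume of `k` vectors in `ℝ^k` is the absolute value of the determinant of their
coordinate matrix. For `v_2, …, v_{k+1}` that matrix is `√k • 1`; for `v_1, …, v_k` only `v_1`
has a nonzero last coordinate, and the Laplace expansion along it leaves `√k • 1` of size `k - 1`.
Greediness: all the `v_i` have norm `√k`, and a vector not chosen yet has the same inner products
with the chosen ones as the next vector `v_t` (namely `√k` with `v_1` and `0` with the others),
so at every step each candidate gives the volume of `v_t` or, if already chosen, volume `0`. -/

open scoped RealInnerProductSpace

/-- `vol u` is the nonnegative real number whose square equals the determinant of the
Gram matrix `(⟪u a, u b⟫)_{a,b}` of the vectors `u 0, …, u (m-1)` in `ℝ^d`. -/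
noncomputable def vol {d m : ℕ} (u : Fin m → EuclideanSpace ℝ (Fin d)) : ℝ :=
  Real.sqrt (Matrix.det (Matrix.of fun a b : Fin m => ⟪u a, u b⟫))

/-- `v 0, …, v (k-1)` is a greedy sequence for the finite set `P`: each `v t` belongs to `P`,
and for every `t` and every `p ∈ P`, `vol (v 0, …, v (t-1), p) ≤ vol (v 0, …, v (t-1), v t)`. -/
def IsGreedySeq {d k : ℕ} (P : Finset (EuclideanSpace ℝ (Fin d)))
    (v : Fin k → EuclideanSpace ℝ (Fin d)) : Prop :=
  (∀ t, v t ∈ P) ∧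
  ∀ t : Fin k, ∀ p ∈ P,
    vol (Fin.snoc (fun j : Fin t.val => v (Fin.castLE t.isLt.le j)) p) ≤
    vol (Fin.snoc (fun j : Fin t.val => v (Fin.castLE t.isLt.le j)) (v t))

section Vol

variable {d n : ℕ}

lemma vol_nonneg (u : Fin n → EuclideanSpace ℝ (Fin d)) : 0 ≤ vol u :=
  Real.sqrt_nonneg _

lemma vol_eq_abs_det (u : Fin d → EuclideanSpace ℝ (Fin d)) :
    vol u = |(Matrix.of fun i j => u i j).det| := by
  set A : Matrix (Fin d) (Fin d) ℝ := Matrix.of fun i j => u i j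
  have hgram : (Matrix.of fun a b => ⟪u a, u b⟫) = A * A.transpose := by
    ext a b
    simp [A, Matrix.mul_apply, PiLp.inner_apply, mul_comm]
  rw [vol, hgram, Matrix.det_mul, Matrix.det_transpose, Real.sqrt_mul_self_eq_abs]

lemma vol_snoc_self (u : Fin n → EuclideanSpace ℝ (Fin d)) (i : Fin n) :
    vol (Fin.snoc u (u i) : Fin (n + 1) → _) = 0 := by
  rw [vol, Matrix.det_zero_of_row_eq (Fin.castSucc_ne_last i), Real.sqrt_zero]
  ext j
  simp

lemma vol_snoc_congr (u : Fin n → EuclideanSpace ℝ (Fin d)) {p q : EuclideanSpace ℝ (Fin d)}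
    (h : ∀ i, ⟪u i, p⟫ = ⟪u i, q⟫) (hnorm : ‖p‖ = ‖q‖) :
    vol (Fin.snoc u p : Fin (n + 1) → _) = vol (Fin.snoc u q : Fin (n + 1) → _) := by
  unfold vol
  congr 2
  ext a b
  induction a using Fin.lastCases <;> induction b using Fin.lastCases <;>
    simp [h, hnorm, real_inner_comm _ p, real_inner_comm _ q]

end Vol

noncomputable def tightFamily (k : ℕ) : Fin (k + 1) → EuclideanSpace ℝ (Fin k) :=
  Fin.cons (∑ j, EuclideanSpace.single j 1) fun j => Real.sqrt k • EuclideanSpace.single j 1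

section TightFamily

variable {k : ℕ}

@[simp]
lemma tightFamily_zero_apply (j : Fin k) : tightFamily k 0 j = 1 := by
  simp [tightFamily, WithLp.ofLp_sum]

@[simp]
lemma tightFamily_succ_apply (i j : Fin k) :
    tightFamily k i.succ j = if j = i then Real.sqrt k else 0 := by
  simp [tightFamily]

lemma norm_tightFamily (a : Fin (k + 1)) : ‖tightFamily k a‖ = Real.sqrt k := by
  cases a using Fin.cases with
  | zero => simp [EuclideanSpace.norm_eq]
  | succ j => simp [tightFamily, norm_smul]

lemma inner_tightFamily_zero_succ (j : Fin k) :
    ⟪tightFamily k 0, tightFamily k j.succ⟫ = Real.sqrt k := by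
  simp [PiLp.inner_apply]

lemma inner_tightFamily_succ_succ {i j : Fin k} (h : i ≠ j) :
    ⟪tightFamily k i.succ, tightFamily k j.succ⟫ = 0 := by
  simp [PiLp.inner_apply, h]

lemma inner_tightFamily_eq_of_lt {i a b : Fin (k + 1)} (ha : i < a) (hb : i < b) :
    ⟪tightFamily k i, tightFamily k a⟫ = ⟪tightFamily k i, tightFamily k b⟫ := by
  obtain ⟨a, rfl⟩ := Fin.exists_succ_eq.mpr (Fin.ne_zero_of_lt ha)
  obtain ⟨b, rfl⟩ := Fin.exists_succ_eq.mpr (Fin.ne_zero_of_lt hb)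
  cases i using Fin.cases with
  | zero => rw [inner_tightFamily_zero_succ, inner_tightFamily_zero_succ]
  | succ i =>
    rw [Fin.succ_lt_succ_iff] at ha hb
    rw [inner_tightFamily_succ_succ ha.ne, inner_tightFamily_succ_succ hb.ne]

lemma vol_tightFamily_succ : vol (fun j => tightFamily k j.succ) = Real.sqrt k ^ k := by
  have hmat : (Matrix.of fun (i j : Fin k) => tightFamily k i.succ j) = Real.sqrt k • 1 := by
    ext i j
    simp [Matrix.one_apply, eq_comm]
  rw [vol_eq_abs_det, hmat, Matrix.det_smul, Matrix.det_one, mul_one, Fintype.card_fin, abs_pow,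
    abs_of_nonneg (Real.sqrt_nonneg _)]

lemma vol_tightFamily_castSucc :
    vol (fun j => tightFamily k j.castSucc) = Real.sqrt k ^ (k - 1) := by
  cases k with
  | zero => simp [vol]
  | succ m =>
    set A : Matrix (Fin (m + 1)) (Fin (m + 1)) ℝ := Matrix.of fun i j => tightFamily _ i.castSucc j
    have hcol (i : Fin m) : A i.succ (Fin.last m) = 0 := by
      simp [A, (Fin.castSucc_ne_last i).symm]
    have hminor : A.submatrix Fin.succ Fin.castSucc = Real.sqrt (m + 1 : ℕ) • 1 := by
      ext i j
      simp [A, Matrix.one_apply, eq_comm]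
    rw [vol_eq_abs_det, Matrix.det_succ_column A (Fin.last m), Fin.sum_univ_succ]
    simp [hcol, hminor, A, abs_pow, abs_of_nonneg (Real.sqrt_nonneg _)]

lemma isGreedySeq_tightFamily_castSucc {P : Finset (EuclideanSpace ℝ (Fin k))}
    (hP : (P : Set (EuclideanSpace ℝ (Fin k))) = Set.range (tightFamily k)) :
    IsGreedySeq P (fun j : Fin k => tightFamily k j.castSucc) := by
  have hmem (a : Fin (k + 1)) : tightFamily k a ∈ P := by
    rw [← Finset.mem_coe, hP]
    exact ⟨a, rfl⟩
  refine ⟨fun t => hmem _, fun t p hp => ?_⟩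
  obtain ⟨a, rfl⟩ : p ∈ Set.range (tightFamily k) := hP ▸ Finset.mem_coe.mpr hp
  rcases lt_or_ge a.val t.val with hchosen | hfresh
  · have hprefix : tightFamily k a = tightFamily k (Fin.castLE t.isLt.le ⟨a, hchosen⟩).castSucc :=
      congrArg _ (Fin.ext rfl)
    rw [hprefix, vol_snoc_self]
    exact vol_nonneg _
  · refine (vol_snoc_congr _ (fun i => inner_tightFamily_eq_of_lt ?_ ?_)
      (by rw [norm_tightFamily, norm_tightFamily])).le
    all_goals simp only [Fin.lt_def, Fin.val_castSucc, Fin.val_castLE]; omega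

end TightFamily

/-- **Tightness of local optimality.** In `ℝ^k`, let `v 0 = (1, …, 1)` be the all-ones vector
and `v j.succ = √k • e j` for `j = 0, …, k-1` (so `v 0, …, v k` are the paper's
`v_1, …, v_{k+1}`), and let `P = {v_1, …, v_{k+1}}`.  Then `v_1, …, v_k` is a greedy sequence
for `P`, `vol(v_1, …, v_k)² = k^(k-1)`, `vol(v_2, …, v_{k+1})² = k^k`, and in particular
`vol(v_2, …, v_{k+1}) = √k · vol(v_1, …, v_k)` with `vol(v_1, …, v_k) > 0`: swapping `v_1`
out for `v_{k+1}` multiplies the volume by exactly `√k`. -/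
theorem greedy_tightness {k : ℕ} (hk : 1 ≤ k)
    (v : Fin (k + 1) → EuclideanSpace ℝ (Fin k))
    (h0 : v 0 = ∑ j : Fin k, EuclideanSpace.single j (1 : ℝ))
    (hs : ∀ j : Fin k, v j.succ = Real.sqrt k • EuclideanSpace.single j (1 : ℝ))
    (P : Finset (EuclideanSpace ℝ (Fin k)))
    (hP : (P : Set (EuclideanSpace ℝ (Fin k))) = Set.range v) :
    IsGreedySeq P (fun j : Fin k => v j.castSucc) ∧
    vol (fun j : Fin k => v j.castSucc) ^ 2 = (k : ℝ) ^ (k - 1) ∧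
    vol (fun j : Fin k => v j.succ) ^ 2 = (k : ℝ) ^ k ∧
    vol (fun j : Fin k => v j.succ) = Real.sqrt k * vol (fun j : Fin k => v j.castSucc) ∧
    0 < vol (fun j : Fin k => v j.castSucc) := by
  obtain rfl : v = tightFamily k := funext fun a => Fin.cases h0 hs a
  have hsqrt_pos : 0 < Real.sqrt k := Real.sqrt_pos.mpr (by exact_mod_cast hk)
  have hsq (n : ℕ) : (Real.sqrt k ^ n) ^ 2 = (k : ℝ) ^ n := by
    rw [← pow_mul, mul_comm, pow_mul, Real.sq_sqrt k.cast_nonneg]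
  rw [vol_tightFamily_castSucc, vol_tightFamily_succ]
  refine ⟨isGreedySeq_tightFamily_castSucc hP, hsq _, hsq _, ?_, pow_pos hsqrt_pos _⟩
  rw [← pow_succ', Nat.sub_add_cancel hk]
end

section
/- Let P be a finite set of vectors in ℝ^d, let k ≥ 1, let v_1,…,v_k be a greedy sequence for P, and let v'_1,…,v'_k be the Gram–Schmidt orthogonalization of v_1,…,v_k. Then for every l ∈ {1,…,k} and every p ∈ P, |⟨p, v'_l⟩| ≤ ‖v'_l‖². Equivalently, when v'_l ≠ 0, the Gram–Schmidt coefficient α = ⟨p, v'_l⟩/‖v'_l‖² of any point p ∈ P along v'_l satisfies |α| ≤ 1. -/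
open scoped RealInnerProductSpace

/-- Helper instance so that `gramSchmidt` elaborates over `Fin n`. -/
instance finWellFoundedLT (n : ℕ) : WellFoundedLT (Fin n) := inferInstance

/-! Appending `p` to `u` multiplies the volume by the distance from `p` to `span u`: subtracting
from `p` its projection onto `span u` is a product of transvections on the Gram matrix, after which
the Gram matrix is block diagonal. So as long as the prefix `v_{<l}` has positive volume, the greedy
choice of `v_l` maximises `‖p - π p‖` over `P`, where `π` projects onto `span v_{<l}`, and this
maximum is `‖v'_l‖`. The volume first vanishes after a step with `v'_t = 0`, where greedy bounds
every distance from `P` to `span v_{<t}` by `0`; from then on `P` lies in the span of the prefix.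
Since `v'_l ⟂ span v_{<l}`, `|⟪p, v'_l⟫| = |⟪p - π p, v'_l⟫| ≤ ‖p - π p‖ ‖v'_l‖ ≤ ‖v'_l‖²`. -/

open InnerProductSpace Submodule Matrix Function Set

section GramDeterminant

variable {E : Type*} [NormedAddCommGroup E] [InnerProductSpace ℝ E]

theorem Matrix.gram_sum_smul {m n : Type*} [Fintype n] (M : Matrix m n ℝ) (v : n → E) :
    gram ℝ (fun a => ∑ b, M a b • v b) = M * gram ℝ v * Mᵀ := by
  ext a c
  simp only [gram_apply, sum_inner, inner_sum, real_inner_smul_left, real_inner_smul_right,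
    mul_apply, transpose_apply, Finset.sum_mul]
  exact Finset.sum_congr rfl fun i _ => Finset.sum_congr rfl fun j _ => by ring

theorem Matrix.det_gram_update_add_smul {n : Type*} [Fintype n] [DecidableEq n] (v : n → E)
    {i j : n} (hij : i ≠ j) (c : ℝ) :
    (gram ℝ (update v j (v j + c • v i))).det = (gram ℝ v).det := by
  have htransvection : update v j (v j + c • v i) = fun a => ∑ b, transvection j i c a b • v b := by
    ext1 a
    rcases eq_or_ne a j with rfl | ha
    · simp [transvection, add_smul, Finset.sum_add_distrib, single_apply, one_apply, ite_smul]
    · simp [transvection, one_apply, ite_smul, ha, ha.symm]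
  rw [htransvection, gram_sum_smul, det_mul, det_mul, det_transpose,
    det_transvection_of_ne _ _ hij.symm, one_mul, mul_one]

theorem Matrix.det_gram_update_add_of_mem_span {n : Type*} [Fintype n] [DecidableEq n]
    (v : n → E) (j : n) {w : E} (hw : w ∈ span ℝ (v '' {j}ᶜ)) (x : E) :
    (gram ℝ (update v j (x + w))).det = (gram ℝ (update v j x)).det := by
  suffices ∀ (c : ℝ) x, (gram ℝ (update v j (x + c • w))).det = (gram ℝ (update v j x)).det by
    simpa using this 1 x
  induction hw using Submodule.span_induction with
  | mem y hy =>
    obtain ⟨i, hij, rfl⟩ := hy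
    intro c x
    simpa [update_of_ne hij] using det_gram_update_add_smul (update v j x) hij c
  | zero => simp
  | add y z _ _ hy hz => intro c x; rw [smul_add, ← add_assoc, hz, hy]
  | smul a y _ hy => intro c x; rw [smul_smul, hy]

theorem Matrix.det_gram_snoc_of_forall_inner_eq_zero {m : ℕ} (u : Fin m → E) {q : E}
    (h : ∀ i, ⟪u i, q⟫ = 0) :
    (gram ℝ (Fin.snoc u q)).det = (gram ℝ u).det * ‖q‖ ^ 2 := by
  have hminor : (gram ℝ (Fin.snoc u q)).submatrix (Fin.last m).succAbove (Fin.last m).succAbove =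
      gram ℝ u := by
    ext
    simp [gram_apply, Fin.succAbove_last]
  rw [det_succ_row _ (Fin.last m), Fin.sum_univ_castSucc, hminor]
  simp [gram_apply, h, real_inner_comm _ q, mul_comm]

theorem Matrix.det_gram_snoc {m : ℕ} (u : Fin m → E) (p : E)
    [(span ℝ (range u)).HasOrthogonalProjection] :
    (gram ℝ (Fin.snoc u p)).det =
      (gram ℝ u).det * ‖p - (span ℝ (range u)).starProjection p‖ ^ 2 := by
  set K := span ℝ (range u)
  set q := p - K.starProjection p
  have hrange : range u ⊆ Fin.snoc u q '' {Fin.last m}ᶜ := by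
    rintro _ ⟨i, rfl⟩
    exact ⟨i.castSucc, (Fin.castSucc_lt_last i).ne, by simp⟩
  have hproj : K.starProjection p ∈ span ℝ (Fin.snoc u q '' {Fin.last m}ᶜ) :=
    span_mono hrange (K.starProjection_apply_mem p)
  have hdet := det_gram_update_add_of_mem_span (Fin.snoc u q) (Fin.last m) hproj q
  rw [Fin.update_snoc_last, Fin.update_snoc_last, sub_add_cancel] at hdet
  rw [hdet, det_gram_snoc_of_forall_inner_eq_zero]
  exact fun i => inner_right_of_mem_orthogonal (subset_span (mem_range_self i))
    (K.sub_starProjection_mem_orthogonal p)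

end GramDeterminant

section GramSchmidt

variable {𝕜 E ι : Type*} [RCLike 𝕜] [NormedAddCommGroup E] [InnerProductSpace 𝕜 E]
  [LinearOrder ι] [LocallyFiniteOrderBot ι] [WellFoundedLT ι]

theorem InnerProductSpace.gramSchmidt_mem_orthogonal_span_Iio (f : ι → E) (n : ι) :
    gramSchmidt 𝕜 f n ∈ (span 𝕜 (f '' Iio n))ᗮ := by
  have hortho : span 𝕜 {gramSchmidt 𝕜 f n} ⟂ span 𝕜 (gramSchmidt 𝕜 f '' Iio n) :=
    isOrtho_span.2 <| by
      rintro _ rfl _ ⟨i, hi, rfl⟩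
      exact gramSchmidt_orthogonal 𝕜 f (ne_of_gt hi)
  rw [← span_gramSchmidt_Iio]
  exact hortho (mem_span_singleton_self _)

theorem InnerProductSpace.starProjection_span_image_Iio_self (f : ι → E) (n : ι)
    [(span 𝕜 (f '' Iio n)).HasOrthogonalProjection] :
    (span 𝕜 (f '' Iio n)).starProjection (f n) = f n - gramSchmidt 𝕜 f n := by
  have hmem : f n - gramSchmidt 𝕜 f n ∈ span 𝕜 (f '' Iio n) := by
    rw [← span_gramSchmidt_Iio, sub_eq_of_eq_add' (gramSchmidt_def'' 𝕜 f n)]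
    exact sum_mem fun i hi => smul_mem _ _ (subset_span ⟨i, Finset.mem_Iio.1 hi, rfl⟩)
  exact eq_starProjection_of_mem_orthogonal' hmem (gramSchmidt_mem_orthogonal_span_Iio f n)
    (sub_add_cancel _ _).symm

end GramSchmidt

theorem Fin.range_take_eq_image_Iio {α : Type*} {k n : ℕ} (v : Fin k → α) (h : n < k) :
    range (Fin.take n h.le v) = v '' Iio ⟨n, h⟩ := by
  ext x
  constructor
  · rintro ⟨j, rfl⟩
    exact ⟨Fin.castLE h.le j, j.isLt, rfl⟩
  · rintro ⟨i, hi, rfl⟩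
    exact ⟨⟨i, hi⟩, rfl⟩

section Greedy

variable {d k : ℕ}

theorem vol_eq_sqrt_det_gram {m : ℕ} (u : Fin m → EuclideanSpace ℝ (Fin d)) :
    vol u = √(gram ℝ u).det :=
  rfl

theorem vol_snoc {m : ℕ} (u : Fin m → EuclideanSpace ℝ (Fin d)) (p : EuclideanSpace ℝ (Fin d)) :
    vol (Fin.snoc u p) = vol u * ‖p - (span ℝ (range u)).starProjection p‖ := by
  rw [vol_eq_sqrt_det_gram, vol_eq_sqrt_det_gram, det_gram_snoc, Real.sqrt_mul' _ (sq_nonneg _),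
    Real.sqrt_sq (norm_nonneg _)]

theorem vol_take_succ (v : Fin k → EuclideanSpace ℝ (Fin d)) {n : ℕ} (h : n < k) :
    vol (Fin.take (n + 1) h v) = vol (Fin.take n h.le v) * ‖gramSchmidt ℝ v ⟨n, h⟩‖ := by
  rw [Fin.take_succ_eq_snoc, vol_snoc, Fin.range_take_eq_image_Iio,
    starProjection_span_image_Iio_self, sub_sub_cancel]

variable {P : Finset (EuclideanSpace ℝ (Fin d))} {v : Fin k → EuclideanSpace ℝ (Fin d)}

theorem IsGreedySeq.norm_sub_starProjection_le_of_vol_pos (hv : IsGreedySeq P v) (l : Fin k)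
    {p : EuclideanSpace ℝ (Fin d)} (hp : p ∈ P) (hvol : 0 < vol (Fin.take l l.isLt.le v)) :
    ‖p - (span ℝ (v '' Iio l)).starProjection p‖ ≤ ‖gramSchmidt ℝ v l‖ := by
  have hgreedy : vol (Fin.snoc (Fin.take l l.isLt.le v) p) ≤
      vol (Fin.snoc (Fin.take l l.isLt.le v) (v l)) := hv.2 l p hp
  rw [vol_snoc, vol_snoc, Fin.range_take_eq_image_Iio v l.isLt,
    starProjection_span_image_Iio_self, sub_sub_cancel] at hgreedy
  exact le_of_mul_le_mul_left hgreedy hvol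

theorem IsGreedySeq.vol_take_pos_or_subset_span (hv : IsGreedySeq P v) (n : ℕ) (hn : n ≤ k) :
    0 < vol (Fin.take n hn v) ∨ ∀ p ∈ P, p ∈ span ℝ (range (Fin.take n hn v)) := by
  induction n with
  | zero => simp [vol_eq_sqrt_det_gram]
  | succ n ih =>
    have hlt : n < k := hn
    have hmono : span ℝ (range (Fin.take n hlt.le v)) ≤ span ℝ (range (Fin.take (n + 1) hn v)) :=
      span_mono fun _ ⟨i, hi⟩ => ⟨i.castSucc, hi⟩
    rcases ih hlt.le with hpos | hsub
    · by_cases h0 : gramSchmidt ℝ v ⟨n, hlt⟩ = 0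
      · refine Or.inr fun p hp => hmono ?_
        have hdist := hv.norm_sub_starProjection_le_of_vol_pos ⟨n, hlt⟩ hp hpos
        rwa [h0, norm_zero, norm_le_zero_iff, sub_eq_zero, eq_comm, starProjection_eq_self_iff,
          ← Fin.range_take_eq_image_Iio] at hdist
      · exact Or.inl (by rw [vol_take_succ]; exact mul_pos hpos (norm_pos_iff.2 h0))
    · exact Or.inr fun p hp => hmono (hsub p hp)

theorem IsGreedySeq.norm_sub_starProjection_le (hv : IsGreedySeq P v) (l : Fin k)
    {p : EuclideanSpace ℝ (Fin d)} (hp : p ∈ P) :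
    ‖p - (span ℝ (v '' Iio l)).starProjection p‖ ≤ ‖gramSchmidt ℝ v l‖ := by
  rcases hv.vol_take_pos_or_subset_span l l.isLt.le with hpos | hsub
  · exact hv.norm_sub_starProjection_le_of_vol_pos l hp hpos
  · rw [← Fin.range_take_eq_image_Iio v l.isLt, starProjection_eq_self_iff.2 (hsub p hp),
      sub_self, norm_zero]
    exact norm_nonneg _

end Greedy

theorem greedy_gramSchmidt_coeff_le_one_general {d k : ℕ}
    (P : Finset (EuclideanSpace ℝ (Fin d)))
    (v : Fin k → EuclideanSpace ℝ (Fin d)) (hv : IsGreedySeq P v) :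
    ∀ l : Fin k, ∀ p ∈ P,
      |⟪p, InnerProductSpace.gramSchmidt ℝ v l⟫| ≤ ‖InnerProductSpace.gramSchmidt ℝ v l‖ ^ 2 := by
  intro l p hp
  set K := span ℝ (v '' Iio l)
  have hinner : ⟪p, gramSchmidt ℝ v l⟫ = ⟪p - K.starProjection p, gramSchmidt ℝ v l⟫ := by
    rw [inner_sub_left, inner_right_of_mem_orthogonal (K.starProjection_apply_mem p)
      (gramSchmidt_mem_orthogonal_span_Iio v l), sub_zero]
  calc |⟪p, gramSchmidt ℝ v l⟫|
      ≤ ‖p - K.starProjection p‖ * ‖gramSchmidt ℝ v l‖ := hinner ▸ abs_real_inner_le_norm _ _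
    _ ≤ ‖gramSchmidt ℝ v l‖ * ‖gramSchmidt ℝ v l‖ := by
        gcongr
        exact hv.norm_sub_starProjection_le l hp
    _ = ‖gramSchmidt ℝ v l‖ ^ 2 := (sq _).symm

/-- **Gram–Schmidt coefficients of greedy are bounded by 1.** If `v 0, …, v (k-1)` is a
greedy sequence for `P` and `v' = gramSchmidt ℝ v` is its Gram–Schmidt orthogonalization, then
for every `l` and every `p ∈ P`, `|⟪p, v' l⟫| ≤ ‖v' l‖²`; equivalently, when `v' l ≠ 0` the
Gram–Schmidt coefficient `α = ⟪p, v' l⟫ / ‖v' l‖²` of any `p ∈ P` along `v' l` satisfies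
`|α| ≤ 1`. -/
theorem greedy_gramSchmidt_coeff_le_one {d k : ℕ} (hk : 1 ≤ k)
    (P : Finset (EuclideanSpace ℝ (Fin d)))
    (v : Fin k → EuclideanSpace ℝ (Fin d)) (hv : IsGreedySeq P v) :
    ∀ l : Fin k, ∀ p ∈ P,
      |⟪p, InnerProductSpace.gramSchmidt ℝ v l⟫| ≤ ‖InnerProductSpace.gramSchmidt ℝ v l‖ ^ 2 :=
  greedy_gramSchmidt_coeff_le_one_general P v hv
end
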